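/- arXiv:math/0611805 — 2 statements merged into one kernel-verified Lean document; each statement's English description precedes it below -/
import Mathlib

section
/- Let θ_0 ∈ [0, π/2) and let {c_n}_{n∈ℤ} be a complex sequence such that c_n ∈ K(θ_0) and c_n + c_{−n} ∈ K(θ_0) for all n ≥ 1, where K(θ_0) = {z ∈ ℂ : |arg z| ≤ θ_0}. Suppose there exist λ ≥ 2 and a constant C > 0 such that ∑_{k=n}^{2n} |c_k − c_{k+1}| ≤ (C/n)·∑_{k=⌊n/λ⌋}^{⌊λn⌋} |c_k| for all n ≥ 1. If lim_{n→∞} n·c_n = 0 and ∑_{n=1}^∞ |c_n + c_{−n}| < ∞, then the symmetric partial sums S_n(f,x) = ∑_{k=−n}^{n} c_k e^{ikx} converge uniformly on ℝ (so the sum function f is continuous and 2π-periodic, and lim_{n→∞} sup_x |f(x) − S_n(f,x)| = 0). -/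
open Filter

/-- The `n`-th symmetric partial sum `∑_{k=-n}^{n} c_k e^{ikx}` of a trigonometric series. -/
noncomputable def symPartialSum (c : ℤ → ℂ) (n : ℕ) (x : ℝ) : ℂ :=
  ∑ k ∈ Finset.Icc (-(n : ℤ)) (n : ℤ), c k * Complex.exp ((k : ℂ) * x * Complex.I)

/-!
Pairing the indices `k` and `-k` writes `S_m - S_n` as
`∑_{n<k≤m} (c_k + c_{-k}) e^{-ikx} + 2i ∑_{n<k≤m} c_k sin kx`. The first sum is a tail of the
convergent series `∑ |c_k + c_{-k}|`. For the sine sum, the mean value bounded variation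
condition and `k c_k → 0`, summed over the dyadic blocks `[2^j n, 2^{j+1} n]`, give
`n ∑_{k ≥ n} |c_k - c_{k+1}| → 0`. After reducing `x` to `(0, π]`, the terms with `k < π/x` are
at most `k |c_k| x` each, and the remaining ones are handled by Abel summation against the
Dirichlet bound `|∑ sin jx| ≤ π/x`. So the partial sums are uniformly Cauchy.
-/

open Finset Real Topology

lemma two_mul_sin_half_mul_sum_range_sin (y : ℝ) (n : ℕ) :
    2 * sin (y / 2) * ∑ j ∈ range n, sin (j * y) = cos (y / 2) - cos ((n - 1 / 2) * y) := by
  induction n with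
  | zero =>
    simp only [range_zero, sum_empty, mul_zero, CharP.cast_eq_zero, zero_sub, neg_mul, cos_neg]
    ring_nf
  | succ n ih =>
    rw [sum_range_succ, mul_add, ih, Nat.cast_succ,
      show (n + 1 - 1 / 2) * y = n * y + y / 2 by ring,
      show (n - 1 / 2) * y = n * y - y / 2 by ring, cos_add, cos_sub]
    ring

lemma abs_sum_range_sin_le {y : ℝ} (hy₀ : 0 < y) (hyπ : y ≤ π) (n : ℕ) :
    |∑ j ∈ range n, sin (j * y)| ≤ π / y := by
  have hjordan : y / π ≤ sin (y / 2) := by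
    simpa using mul_le_sin (x := y / 2) (by positivity) (by linarith)
  have hsin : 0 < sin (y / 2) := (div_pos hy₀ pi_pos).trans_le hjordan
  have hbound : |∑ j ∈ range n, sin (j * y)| * sin (y / 2) ≤ 1 := by
    have h := congrArg abs (two_mul_sin_half_mul_sum_range_sin y n)
    rw [abs_mul, abs_mul, abs_of_pos hsin, abs_two] at h
    have := (abs_sub _ _).trans (add_le_add (abs_cos_le_one (y / 2))
      (abs_cos_le_one ((n - 1 / 2) * y)))
    nlinarith
  set S := |∑ j ∈ range n, sin (j * y)|
  rw [le_div_iff₀ hy₀]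
  calc S * y = π * (S * (y / π)) := by field_simp
    _ ≤ π * (S * sin (y / 2)) :=
      mul_le_mul_of_nonneg_left (mul_le_mul_of_nonneg_left hjordan (abs_nonneg _)) pi_pos.le
    _ ≤ π := mul_le_of_le_one_right pi_pos.le hbound

lemma norm_sum_Ico_smul_le {𝕜 E : Type*} [NormedField 𝕜] [SeminormedAddCommGroup E]
    [NormedSpace 𝕜 E] (f : ℕ → 𝕜) (g : ℕ → E) {B : ℝ} (hB : ∀ n, ‖∑ i ∈ range n, g i‖ ≤ B)
    {m n : ℕ} (hmn : m < n) :
    ‖∑ i ∈ Ico m n, f i • g i‖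
      ≤ (‖f (n - 1)‖ + ‖f m‖ + ∑ i ∈ Ico m (n - 1), ‖f (i + 1) - f i‖) * B := by
  rw [sum_Ico_by_parts f g hmn, add_mul, add_mul, sum_mul]
  refine (norm_sub_le _ _).trans (add_le_add ((norm_sub_le _ _).trans ?_) ?_)
  · rw [norm_smul, norm_smul]
    exact add_le_add (mul_le_mul_of_nonneg_left (hB n) (norm_nonneg _))
      (mul_le_mul_of_nonneg_left (hB m) (norm_nonneg _))
  · refine (norm_sum_le _ _).trans (sum_le_sum fun i _ => ?_)
    rw [norm_smul]
    exact mul_le_mul_of_nonneg_left (hB _) (norm_nonneg _)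

section SineSeries

variable {b : ℕ → ℂ}

lemma norm_sum_Ico_mul_sin_le_card_mul {y δ : ℝ} (hy : 0 ≤ y) {n : ℕ}
    (hb : ∀ k ≥ n, k * ‖b k‖ ≤ δ) (m : ℕ) :
    ‖∑ k ∈ Ico n m, b k * sin (k * y)‖ ≤ (m - n : ℕ) * (δ * y) := by
  calc ‖∑ k ∈ Ico n m, b k * sin (k * y)‖ ≤ ∑ k ∈ Ico n m, δ * y := by
        refine (norm_sum_le _ _).trans (sum_le_sum fun k hk => ?_)
        rw [norm_mul, Complex.norm_real, norm_eq_abs]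
        calc ‖b k‖ * |sin (k * y)| ≤ ‖b k‖ * (k * y) := by
              gcongr
              exact abs_sin_le_abs.trans (abs_of_nonneg (by positivity)).le
          _ = (k * ‖b k‖) * y := by ring
          _ ≤ δ * y := by gcongr; exact hb k (mem_Ico.1 hk).1
    _ = (m - n : ℕ) * (δ * y) := by rw [sum_const, Nat.card_Ico, nsmul_eq_mul]

lemma norm_sum_Ico_mul_sin_le_three_mul {y δ : ℝ} (hy₀ : 0 < y) (hyπ : y ≤ π) {N : ℕ}
    (hNy : π ≤ N * y) (hb : ∀ k ≥ N, k * ‖b k‖ ≤ δ) (m : ℕ)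
    (hvar : N * ∑ k ∈ Ico N m, ‖b k - b (k + 1)‖ ≤ δ) :
    ‖∑ k ∈ Ico N m, b k * sin (k * y)‖ ≤ 3 * δ := by
  have hδ : 0 ≤ δ := (by positivity : (0 : ℝ) ≤ N * ‖b N‖).trans (hb N le_rfl)
  rcases le_or_gt m N with hmN | hNm
  · simp only [Ico_eq_empty_of_le hmN, sum_empty, norm_zero]
    positivity
  have hN : (0 : ℝ) < N := by nlinarith [pi_pos]
  set X := ‖b (m - 1)‖ + ‖b N‖ + ∑ i ∈ Ico N (m - 1), ‖b (i + 1) - b i‖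
  have hX : N * X ≤ 3 * δ := by
    have hlast : N * ‖b (m - 1)‖ ≤ δ := by
      refine le_trans ?_ (hb (m - 1) (by omega))
      gcongr
      exact_mod_cast (by omega : N ≤ m - 1)
    have hdiff : ∑ i ∈ Ico N (m - 1), ‖b (i + 1) - b i‖ ≤ ∑ k ∈ Ico N m, ‖b k - b (k + 1)‖ := by
      rw [sum_congr rfl fun i _ => norm_sub_rev (b (i + 1)) (b i)]
      exact sum_le_sum_of_subset_of_nonneg (Ico_subset_Ico_right (by omega))
        fun _ _ _ => norm_nonneg _
    have := hb N le_rfl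
    nlinarith
  have hpartial : ∀ n, ‖∑ i ∈ range n, (sin (i * y) : ℂ)‖ ≤ π / y := fun n => by
    rw [← Complex.ofReal_sum, Complex.norm_real, norm_eq_abs]
    exact abs_sum_range_sin_le hy₀ hyπ n
  calc ‖∑ k ∈ Ico N m, b k * sin (k * y)‖ ≤ X * (π / y) := by
        simpa only [smul_eq_mul] using norm_sum_Ico_smul_le b _ hpartial hNm
    _ ≤ X * N := by gcongr; rwa [div_le_iff₀ hy₀]
    _ ≤ 3 * δ := by linarith

lemma norm_sum_Ico_mul_sin_le {y δ : ℝ} (hy₀ : 0 < y) (hyπ : y ≤ π) {n : ℕ}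
    (hb : ∀ k ≥ n, k * ‖b k‖ ≤ δ)
    (hvar : ∀ N ≥ n, ∀ m, N * ∑ k ∈ Ico N m, ‖b k - b (k + 1)‖ ≤ δ) (m : ℕ) :
    ‖∑ k ∈ Ico n m, b k * sin (k * y)‖ ≤ (2 * π + 3) * δ := by
  have hδ : 0 ≤ δ := (by positivity : (0 : ℝ) ≤ n * ‖b n‖).trans (hb n le_rfl)
  set P := ⌈π / y⌉₊
  set N := max n P
  have hNy : π ≤ N * y := by
    rw [← div_le_iff₀ hy₀]
    exact (Nat.le_ceil _).trans (by exact_mod_cast le_max_right n P)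
  have hshort : ∀ m' ≤ N, ‖∑ k ∈ Ico n m', b k * sin (k * y)‖ ≤ 2 * π * δ := by
    intro m' hm'
    refine (norm_sum_Ico_mul_sin_le_card_mul hy₀.le hb m').trans ?_
    have hcard : ((m' - n : ℕ) : ℝ) ≤ π / y + 1 :=
      calc ((m' - n : ℕ) : ℝ) ≤ P := by exact_mod_cast (by omega : m' - n ≤ P)
        _ ≤ π / y + 1 := (Nat.ceil_lt_add_one (by positivity)).le
    calc ((m' - n : ℕ) : ℝ) * (δ * y) ≤ (π / y + 1) * (δ * y) := by gcongr
      _ = δ * (π + y) := by field_simp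
      _ ≤ 2 * π * δ := by nlinarith
  rcases le_or_gt m N with hmN | hNm
  · exact (hshort m hmN).trans (by nlinarith)
  have hnN : n ≤ N := le_max_left n P
  rw [← sum_Ico_consecutive _ hnN hNm.le]
  calc _ ≤ ‖∑ k ∈ Ico n N, b k * sin (k * y)‖ + ‖∑ k ∈ Ico N m, b k * sin (k * y)‖ :=
        norm_add_le _ _
    _ ≤ 2 * π * δ + 3 * δ := add_le_add (hshort N le_rfl)
        (norm_sum_Ico_mul_sin_le_three_mul hy₀ hyπ hNy (fun k hk => hb k (hnN.trans hk)) m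
          (hvar N hnN m))
    _ = (2 * π + 3) * δ := by ring

lemma exists_sin_nat_mul_eq (x : ℝ) :
    ∃ y ∈ Set.Icc 0 π, ∃ s : ℝ, |s| = 1 ∧ ∀ k : ℕ, sin (k * x) = s * sin (k * y) := by
  set y := x - round (x / (2 * π)) * (2 * π)
  have hy : |y| ≤ π := by
    have h := abs_sub_round (x / (2 * π))
    have : y = (x / (2 * π) - round (x / (2 * π))) * (2 * π) := by
      simp only [y]; field_simp
    rw [this, abs_mul, abs_of_pos two_pi_pos]
    nlinarith [pi_pos]
  have hsin : ∀ k : ℕ, sin (k * x) = sin (k * y) := fun k => by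
    rw [show (k : ℝ) * x = k * y + (k * round (x / (2 * π)) : ℤ) * (2 * π) by
      push_cast; ring, sin_add_int_mul_two_pi]
  rcases le_total 0 y with hy₀ | hy₀
  · exact ⟨y, ⟨hy₀, (le_abs_self y).trans hy⟩, 1, abs_one, fun k => by rw [hsin, one_mul]⟩
  · refine ⟨-y, ⟨neg_nonneg.2 hy₀, (neg_le_abs y).trans hy⟩, -1, by simp, fun k => ?_⟩
    rw [hsin, mul_neg, sin_neg, neg_one_mul, neg_neg]

lemma eventually_forall_ge_mul_norm_le (hlim : Tendsto (fun n : ℕ => (n : ℂ) * b n) atTop (𝓝 0))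
    {δ : ℝ} (hδ : 0 < δ) : ∀ᶠ n in atTop, ∀ k ≥ n, k * ‖b k‖ ≤ δ := by
  refine eventually_forall_ge_atTop.2 ?_
  filter_upwards [hlim.norm.eventually_lt_const (by simpa using hδ)] with k hk
  simpa using hk.le

lemma eventually_norm_sum_Ico_mul_sin_le
    (hlim : Tendsto (fun n : ℕ => (n : ℂ) * b n) atTop (𝓝 0))
    (hvar : ∀ δ > 0, ∀ᶠ n in atTop, ∀ m, n * ∑ k ∈ Ico n m, ‖b k - b (k + 1)‖ ≤ δ) :
    ∀ ε > 0, ∀ᶠ n in atTop, ∀ m (x : ℝ), ‖∑ k ∈ Ico n m, b k * sin (k * x)‖ ≤ ε := by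
  intro ε hε
  set δ := ε / (2 * π + 3)
  have hδ : 0 < δ := by positivity
  filter_upwards [eventually_forall_ge_mul_norm_le hlim hδ,
    eventually_forall_ge_atTop.2 (hvar δ hδ)] with n hb hvar' m x
  obtain ⟨y, ⟨hy₀, hyπ⟩, s, hs, hsin⟩ := exists_sin_nat_mul_eq x
  have hsum : ∑ k ∈ Ico n m, b k * sin (k * x) = s * ∑ k ∈ Ico n m, b k * sin (k * y) := by
    rw [mul_sum]
    refine sum_congr rfl fun k _ => ?_
    rw [hsin]
    push_cast
    ring
  rw [hsum, norm_mul, Complex.norm_real, norm_eq_abs, hs, one_mul]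
  rcases hy₀.eq_or_lt with rfl | hy₀
  · simpa using hε.le
  · calc _ ≤ (2 * π + 3) * δ := norm_sum_Ico_mul_sin_le hy₀ hyπ hb hvar' m
      _ = ε := mul_div_cancel₀ _ (by positivity)

end SineSeries

section MeanValueBoundedVariation

lemma mul_sum_Ico_le_of_mul_sum_Icc_two_mul_le {a : ℕ → ℝ} (ha : ∀ k, 0 ≤ a k) {A : ℝ} {n : ℕ}
    (hn : 0 < n) (hblock : ∀ N ≥ n, N * ∑ k ∈ Icc N (2 * N), a k ≤ A) (m : ℕ) :
    n * ∑ k ∈ Ico n m, a k ≤ 2 * A := by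
  have hA : 0 ≤ A :=
    (mul_nonneg (Nat.cast_nonneg _) (sum_nonneg fun k _ => ha k)).trans (hblock n le_rfl)
  -- the block `[2^i n, 2^(i+1) n)` contributes at most `A / 2^i` to `n ∑ a k`
  have hdyadic : ∀ j : ℕ, n * ∑ k ∈ Ico n (2 ^ j * n), a k + 2 * A / 2 ^ j ≤ 2 * A := by
    intro j
    induction j with
    | zero => simp
    | succ j ih =>
      rw [show 2 ^ (j + 1) * n = 2 * (2 ^ j * n) by ring]
      have hle : n ≤ 2 ^ j * n := Nat.le_mul_of_pos_left n (by positivity)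
      have hblk : 2 ^ j * (n * ∑ k ∈ Ico (2 ^ j * n) (2 * (2 ^ j * n)), a k) ≤ A :=
        calc 2 ^ j * (n * ∑ k ∈ Ico (2 ^ j * n) (2 * (2 ^ j * n)), a k)
            = ((2 ^ j * n : ℕ) : ℝ) * ∑ k ∈ Ico (2 ^ j * n) (2 * (2 ^ j * n)), a k := by
              push_cast; ring
          _ ≤ ((2 ^ j * n : ℕ) : ℝ) * ∑ k ∈ Icc (2 ^ j * n) (2 * (2 ^ j * n)), a k :=
              mul_le_mul_of_nonneg_left (sum_le_sum_of_subset_of_nonneg Ico_subset_Icc_self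
                fun k _ _ => ha k) (Nat.cast_nonneg _)
          _ ≤ A := hblock _ hle
      rw [← sum_Ico_consecutive a hle (by omega), mul_add]
      have hhalf : 2 * A / 2 ^ (j + 1) = A / 2 ^ j := by rw [pow_succ]; field_simp
      have hlast : n * ∑ k ∈ Ico (2 ^ j * n) (2 * (2 ^ j * n)), a k ≤ A / 2 ^ j := by
        rw [le_div_iff₀ (by positivity)]
        linarith
      have : 2 * A / 2 ^ j = 2 * (A / 2 ^ j) := by ring
      linarith
  have hm : m ≤ 2 ^ m * n := (Nat.lt_two_pow_self).le.trans (Nat.le_mul_of_pos_right _ hn)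
  calc n * ∑ k ∈ Ico n m, a k ≤ n * ∑ k ∈ Ico n (2 ^ m * n), a k :=
        mul_le_mul_of_nonneg_left (sum_le_sum_of_subset_of_nonneg (Ico_subset_Ico_right hm)
          fun k _ _ => ha k) (Nat.cast_nonneg _)
    _ ≤ 2 * A := by linarith [hdyadic m, (by positivity : 0 ≤ 2 * A / 2 ^ m)]

variable {b : ℕ → ℂ} {lam C : ℝ}

lemma mul_sum_Icc_two_mul_norm_sub_le (hlam : 1 ≤ lam) (hC : 0 ≤ C)
    (hMVBV : ∀ n : ℕ, 1 ≤ n → ∑ k ∈ Icc n (2 * n), ‖b k - b (k + 1)‖ ≤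
      (C / n) * ∑ k ∈ Icc ⌊(n : ℝ) / lam⌋₊ ⌊lam * n⌋₊, ‖b k‖)
    {δ : ℝ} {N₀ : ℕ} (hN₀ : 0 < N₀) (hb : ∀ k ≥ N₀, k * ‖b k‖ ≤ δ) {n : ℕ}
    (hn : N₀ ≤ ⌊(n : ℝ) / lam⌋₊) :
    n * ∑ k ∈ Icc n (2 * n), ‖b k - b (k + 1)‖ ≤ 4 * C * lam ^ 2 * δ := by
  set F := ⌊(n : ℝ) / lam⌋₊
  set T := ∑ k ∈ Icc F ⌊lam * n⌋₊, ‖b k‖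
  have hlam₀ : 0 < lam := by linarith
  have hF : (1 : ℝ) ≤ F := by exact_mod_cast hN₀.trans_le hn
  have hn₁ : 1 ≤ n := by
    by_contra! h
    obtain rfl : n = 0 := by omega
    simp only [F, CharP.cast_eq_zero, zero_div, Nat.floor_zero, nonpos_iff_eq_zero] at hn
    omega
  have hn₀ : (0 : ℝ) < n := by exact_mod_cast hn₁
  have hnF : (n : ℝ) ≤ 2 * lam * F := by
    have h := Nat.lt_floor_add_one ((n : ℝ) / lam)
    rw [div_lt_iff₀ hlam₀] at h
    nlinarith
  have hterm : ∀ k ∈ Icc F ⌊lam * n⌋₊, n * ‖b k‖ ≤ 2 * lam * δ := by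
    intro k hk
    have hFk := (mem_Icc.1 hk).1
    calc n * ‖b k‖ ≤ 2 * lam * F * ‖b k‖ := by gcongr
      _ ≤ 2 * lam * (k * ‖b k‖) := by rw [mul_assoc]; gcongr
      _ ≤ 2 * lam * δ := by gcongr; exact hb k (hn.trans hFk)
  have hcard : ((Icc F ⌊lam * n⌋₊).card : ℝ) ≤ 2 * lam * n := by
    have h₁ : ((Icc F ⌊lam * n⌋₊).card : ℝ) ≤ ⌊lam * n⌋₊ + 1 := by
      rw [Nat.card_Icc]; exact_mod_cast Nat.sub_le _ _
    have h₂ : (⌊lam * n⌋₊ : ℝ) ≤ lam * n := Nat.floor_le (by positivity)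
    have h₃ : (1 : ℝ) ≤ lam * n := one_le_mul_of_one_le_of_one_le hlam (by exact_mod_cast hn₁)
    linarith
  have hT : T ≤ 4 * lam ^ 2 * δ := by
    have hδ : 0 ≤ δ := (mul_nonneg (Nat.cast_nonneg _) (norm_nonneg _)).trans (hb N₀ le_rfl)
    refine le_of_mul_le_mul_left ?_ hn₀
    calc n * T ≤ (Icc F ⌊lam * n⌋₊).card • (2 * lam * δ) := by
          rw [mul_sum]; exact sum_le_card_nsmul _ _ _ hterm
      _ ≤ 2 * lam * n * (2 * lam * δ) := by rw [nsmul_eq_mul]; gcongr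
      _ = n * (4 * lam ^ 2 * δ) := by ring
  calc n * ∑ k ∈ Icc n (2 * n), ‖b k - b (k + 1)‖ ≤ n * (C / n * T) := by
        gcongr; exact hMVBV n hn₁
    _ = C * T := by field_simp
    _ ≤ 4 * C * lam ^ 2 * δ := by nlinarith

lemma eventually_mul_sum_Ico_norm_sub_le (hlam : 1 ≤ lam) (hC : 0 ≤ C)
    (hMVBV : ∀ n : ℕ, 1 ≤ n → ∑ k ∈ Icc n (2 * n), ‖b k - b (k + 1)‖ ≤
      (C / n) * ∑ k ∈ Icc ⌊(n : ℝ) / lam⌋₊ ⌊lam * n⌋₊, ‖b k‖)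
    (hlim : Tendsto (fun n : ℕ => (n : ℂ) * b n) atTop (𝓝 0)) :
    ∀ δ > 0, ∀ᶠ n in atTop, ∀ m, n * ∑ k ∈ Ico n m, ‖b k - b (k + 1)‖ ≤ δ := by
  intro δ hδ
  set δ' := δ / (8 * C * lam ^ 2 + 1)
  have hδ' : δ' * (8 * C * lam ^ 2 + 1) = δ := div_mul_cancel₀ _ (by positivity)
  obtain ⟨N₀, hN₀⟩ := eventually_atTop.1
    ((eventually_forall_ge_mul_norm_le hlim (by positivity : 0 < δ')).and (eventually_gt_atTop 0))
  obtain ⟨hb, hN₀pos⟩ := hN₀ N₀ le_rfl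
  have hfloor : ∀ᶠ n : ℕ in atTop, N₀ ≤ ⌊(n : ℝ) / lam⌋₊ := by
    filter_upwards [eventually_ge_atTop ⌈lam * N₀⌉₊] with n hn
    refine Nat.le_floor ((le_div_iff₀ (by linarith)).2 ?_)
    linarith [(Nat.ceil_le.1 hn : lam * N₀ ≤ n)]
  filter_upwards [eventually_forall_ge_atTop.2 hfloor, eventually_gt_atTop 0] with n hn hn₀ m
  calc n * ∑ k ∈ Ico n m, ‖b k - b (k + 1)‖ ≤ 2 * (4 * C * lam ^ 2 * δ') :=
        mul_sum_Ico_le_of_mul_sum_Icc_two_mul_le (fun _ => norm_nonneg _) hn₀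
          (fun N hN => mul_sum_Icc_two_mul_norm_sub_le hlam hC hMVBV hN₀pos hb (hn N hN)) m
    _ ≤ δ := by nlinarith [(by positivity : 0 < δ')]

end MeanValueBoundedVariation

lemma Summable.eventually_forall_norm_sum_Ioc_lt {E : Type*} [SeminormedAddCommGroup E]
    {f : ℕ → E} (hf : Summable f) {ε : ℝ} (hε : 0 < ε) :
    ∀ᶠ n in atTop, ∀ m, ‖∑ k ∈ Ioc n m, f k‖ < ε := by
  obtain ⟨s, hs⟩ := cauchySeq_finset_iff_vanishing_norm.1 hf.hasSum.cauchySeq ε hε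
  filter_upwards [eventually_ge_atTop (s.sup id)] with n hn m
  refine hs _ (disjoint_left.2 fun k hk hks => ?_)
  have := le_sup (f := id) hks
  have := (mem_Ioc.1 hk).1
  simp only [id] at *
  omega

lemma UniformCauchySeqOn.exists_tendstoUniformly {ι α β : Type*} [Nonempty ι] [SemilatticeSup ι]
    [UniformSpace β] [CompleteSpace β] {F : ι → α → β} (hF : UniformCauchySeqOn F atTop Set.univ) :
    ∃ f, TendstoUniformly F f atTop := by
  choose f hf using fun x => cauchySeq_tendsto_of_complete (hF.cauchySeq (Set.mem_univ x))
  exact ⟨f, tendstoUniformlyOn_univ.1 (hF.tendstoUniformlyOn_of_tendsto fun x _ => hf x)⟩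

lemma periodic_of_tendsto {ι α β : Type*} [Add α] [TopologicalSpace β] [T2Space β]
    {l : Filter ι} [l.NeBot] {F : ι → α → β} {f : α → β} {p : α}
    (hF : ∀ i, Function.Periodic (F i) p) (hf : ∀ x, Tendsto (fun i => F i x) l (𝓝 (f x))) :
    Function.Periodic f p := fun x =>
  tendsto_nhds_unique (by simpa only [hF _ x] using hf (x + p)) (hf x)

section SymmetricPartialSums

variable (c : ℤ → ℂ)

lemma continuous_symPartialSum (n : ℕ) : Continuous (symPartialSum c n) := by
  unfold symPartialSum
  fun_prop

lemma periodic_symPartialSum (n : ℕ) : Function.Periodic (symPartialSum c n) (2 * π) := by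
  intro x
  refine sum_congr rfl fun k _ => ?_
  rw [show (k : ℂ) * ((x + 2 * π : ℝ) : ℂ) * Complex.I
      = k * x * Complex.I + k * (2 * π * Complex.I) by push_cast; ring,
    Complex.exp_add, Complex.exp_int_mul_two_pi_mul_I, mul_one]

lemma symPartialSum_succ (n : ℕ) (x : ℝ) :
    symPartialSum c (n + 1) x = symPartialSum c n x
      + ((c (n + 1 : ℕ) + c (-(n + 1 : ℕ))) * Complex.exp (-((n + 1 : ℕ) * x * Complex.I))
        + 2 * Complex.I * (c (n + 1 : ℕ) * sin ((n + 1 : ℕ) * x))) := by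
  have hIcc : Icc (-((n + 1 : ℕ) : ℤ)) (n + 1 : ℕ)
      = insert (-((n + 1 : ℕ) : ℤ)) (insert ((n + 1 : ℕ) : ℤ) (Icc (-(n : ℤ)) n)) := by
    ext k
    simp only [mem_Icc, mem_insert]
    omega
  unfold symPartialSum
  rw [hIcc, sum_insert (by simp only [mem_insert, mem_Icc]; omega),
    sum_insert (by simp only [mem_Icc]; omega), Complex.ofReal_sin, Complex.sin]
  push_cast
  ring_nf
  rw [Complex.I_sq]
  ring

lemma symPartialSum_sub {n m : ℕ} (h : n ≤ m) (x : ℝ) :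
    symPartialSum c m x - symPartialSum c n x = ∑ k ∈ Ioc n m,
      ((c k + c (-k)) * Complex.exp (-(k * x * Complex.I))
        + 2 * Complex.I * (c k * sin (k * x))) := by
  induction m, h using Nat.le_induction with
  | base => simp
  | succ m hm ih => rw [sum_Ioc_succ_top hm, ← ih, symPartialSum_succ]; ring

lemma uniformCauchySeqOn_symPartialSum
    (hsum : Summable fun n : ℕ => ‖c n + c (-(n : ℤ))‖)
    (hsin : ∀ ε > 0, ∀ᶠ n : ℕ in atTop, ∀ (m : ℕ) (x : ℝ),
      ‖∑ k ∈ Ico n m, c k * sin (k * x)‖ ≤ ε) :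
    UniformCauchySeqOn (symPartialSum c) atTop Set.univ := by
  rw [Metric.uniformCauchySeqOn_iff]
  intro ε hε
  obtain ⟨N, hN⟩ := eventually_atTop.1
    ((hsum.eventually_forall_norm_sum_Ioc_lt (half_pos hε)).and
      ((tendsto_add_atTop_nat 1).eventually (hsin (ε / 8) (by positivity))))
  have key : ∀ n ≥ N, ∀ m ≥ n, ∀ x, dist (symPartialSum c m x) (symPartialSum c n x) < ε := by
    intro n hn m hm x
    obtain ⟨hpair, hsin'⟩ := hN n hn
    have hexp : ∀ k ∈ Ioc n m, ‖(c k + c (-k)) * Complex.exp (-(k * x * Complex.I))‖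
        = ‖c k + c (-k)‖ := fun k _ => by simp [Complex.norm_exp]
    have h₁ : ∑ k ∈ Ioc n m, ‖c k + c (-k)‖ < ε / 2 := by
      simpa [Real.norm_of_nonneg (sum_nonneg fun k _ => norm_nonneg _)] using hpair m
    have h₂ : ‖∑ k ∈ Ioc n m, c k * sin (k * x)‖ ≤ ε / 8 := by
      rw [← Ico_add_one_add_one_eq_Ioc]
      exact hsin' (m + 1) x
    rw [dist_eq_norm, symPartialSum_sub c hm, sum_add_distrib, ← mul_sum]
    calc _ ≤ ∑ k ∈ Ioc n m, ‖c k + c (-k)‖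
          + ‖2 * Complex.I‖ * ‖∑ k ∈ Ioc n m, c k * sin (k * x)‖ := by
          rw [← sum_congr rfl hexp, ← norm_mul]
          exact (norm_add_le _ _).trans (add_le_add_left (norm_sum_le _ _) _)
      _ < ε := by simp only [norm_mul, Complex.norm_I, Complex.norm_ofNat]; linarith
  refine ⟨N, fun m hm n hn x _ => ?_⟩
  rcases le_total n m with h | h
  · exact key n hn m h x
  · rw [dist_comm]
    exact key m hm n h x

end SymmetricPartialSums

theorem stmt10_general
    (c : ℤ → ℂ)
    (lam : ℝ) (hlam : 2 ≤ lam) (C : ℝ) (hC : 0 < C)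
    (hMVBV : ∀ n : ℕ, 1 ≤ n →
      ∑ k ∈ Finset.Icc n (2 * n), ‖c k - c (k + 1)‖ ≤
        (C / n) * ∑ k ∈ Finset.Icc ⌊(n : ℝ) / lam⌋₊ ⌊lam * n⌋₊, ‖c k‖)
    (hlim : Tendsto (fun n : ℕ => (n : ℂ) * c n) atTop (nhds 0))
    (hsum : Summable fun n : ℕ => ‖c n + c (-(n : ℤ))‖) :
    ∃ f : ℝ → ℂ, Continuous f ∧ Function.Periodic f (2 * Real.pi) ∧
      TendstoUniformly (fun (n : ℕ) (x : ℝ) => symPartialSum c n x) f atTop := by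
  have hvar := eventually_mul_sum_Ico_norm_sub_le (b := fun k : ℕ => c k)
    (by linarith : 1 ≤ lam) hC.le (by simpa only [Nat.cast_add, Nat.cast_one] using hMVBV) hlim
  obtain ⟨f, hf⟩ := (uniformCauchySeqOn_symPartialSum c hsum
    (eventually_norm_sum_Ico_mul_sin_le hlim hvar)).exists_tendstoUniformly
  exact ⟨f, hf.continuous (.of_forall (continuous_symPartialSum c)),
    periodic_of_tendsto (periodic_symPartialSum c) hf.tendsto_at, hf⟩

/-- Sufficiency part of the complex-space theorem: under the sector condition,
the mean value bounded variation condition on `|c_k|`, `n·cₙ → 0` and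
`∑ |cₙ + c₋ₙ| < ∞`, the symmetric partial sums converge uniformly on ℝ to a
continuous 2π-periodic sum function. -/
theorem stmt10 (θ₀ : ℝ) (hθ₀ : 0 ≤ θ₀) (hθ₁ : θ₀ < Real.pi / 2)
    (c : ℤ → ℂ)
    (hsector : ∀ n : ℕ, 1 ≤ n →
      |Complex.arg (c n)| ≤ θ₀ ∧ |Complex.arg (c n + c (-(n : ℤ)))| ≤ θ₀)
    (lam : ℝ) (hlam : 2 ≤ lam) (C : ℝ) (hC : 0 < C)
    (hMVBV : ∀ n : ℕ, 1 ≤ n →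
      ∑ k ∈ Finset.Icc n (2 * n), ‖c k - c (k + 1)‖ ≤
        (C / n) * ∑ k ∈ Finset.Icc ⌊(n : ℝ) / lam⌋₊ ⌊lam * n⌋₊, ‖c k‖)
    (hlim : Tendsto (fun n : ℕ => (n : ℂ) * c n) atTop (nhds 0))
    (hsum : Summable fun n : ℕ => ‖c n + c (-(n : ℤ))‖) :
    ∃ f : ℝ → ℂ, Continuous f ∧ Function.Periodic f (2 * Real.pi) ∧
      TendstoUniformly (fun (n : ℕ) (x : ℝ) => symPartialSum c n x) f atTop :=
  stmt10_general c lam hlam C hC hMVBV hlim hsum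
end

section
/- (Chaundy–Jolliffe) Let {a_n}_{n≥1} be a non-increasing real sequence with a_n ≥ 0 and lim_{n→∞} a_n = 0. Then the sine series ∑_{n=1}^∞ a_n sin(nx) converges uniformly on ℝ (i.e., its partial sums S_n(x) = ∑_{k=1}^n a_k sin(kx) converge uniformly) if and only if lim_{n→∞} n·a_n = 0. -/
/-!
If the series converges uniformly, its blocks `∑_{n/2 < k ≤ n} a k sin (k x)` tend to `0`
uniformly; at `x = π / 2n` every sine in such a block is at least `1 / 2` (Jordan's inequality),
so the block dominates `n a n / 4`.

Conversely, suppose `k a k ≤ ε` for `k > m` and split the block `∑_{m < k ≤ n}` at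
`j ≈ 1 / |sin (x / 2)|`. Below `j`, the bound `|sin (k x)| ≤ 2 k |sin (x / 2)|` makes the head at
most `2 ε`. Above `j`, Abel summation against the Dirichlet-kernel bound
`|∑ sin (k x)| ≤ 1 / |sin (x / 2)|` makes the tail at most `a (j + 1) / |sin (x / 2)| ≤ ε`.
-/

open Filter Finset Real

theorem exists_tendstoUniformly_iff_uniformCauchySeqOn {ι α β : Type*} [Nonempty ι]
    [SemilatticeSup ι] [UniformSpace β] [CompleteSpace β] {F : ι → α → β} :
    (∃ f, TendstoUniformly F f atTop) ↔ UniformCauchySeqOn F atTop Set.univ := by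
  refine ⟨fun ⟨f, hf⟩ => (tendstoUniformlyOn_univ.mpr hf).uniformCauchySeqOn, fun hF => ?_⟩
  choose f hf using fun x => cauchySeq_tendsto_of_complete (hF.cauchySeq (Set.mem_univ x))
  exact ⟨f, tendstoUniformlyOn_univ.mp (hF.tendstoUniformlyOn_of_tendsto fun x _ => hf x)⟩

theorem sum_Icc_one_sub_sum_Icc_one {M : Type*} [AddCommGroup M] (f : ℕ → M) {m n : ℕ}
    (h : m ≤ n) : ∑ k ∈ Icc 1 n, f k - ∑ k ∈ Icc 1 m, f k = ∑ k ∈ Ioc m n, f k := by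
  have hIcc : ∀ n, Icc 1 n = Ioc 0 n := Icc_add_one_left_eq_Ioc 0
  rw [hIcc, hIcc, ← sum_Ioc_consecutive f (Nat.zero_le m) h, add_sub_cancel_left]

theorem uniformCauchySeqOn_sum_Icc_iff {α E : Type*} [SeminormedAddCommGroup E]
    {f : ℕ → α → E} :
    UniformCauchySeqOn (fun n x => ∑ k ∈ Icc 1 n, f k x) atTop Set.univ ↔
      ∀ ε > 0, ∃ N, ∀ m ≥ N, ∀ n ≥ m, ∀ x, ‖∑ k ∈ Ioc m n, f k x‖ < ε := by
  have hdist : ∀ {m n : ℕ}, m ≤ n → ∀ x,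
      dist (∑ k ∈ Icc 1 n, f k x) (∑ k ∈ Icc 1 m, f k x) = ‖∑ k ∈ Ioc m n, f k x‖ :=
    fun h x => by rw [dist_eq_norm, sum_Icc_one_sub_sum_Icc_one _ h]
  simp only [Metric.uniformCauchySeqOn_iff, Set.mem_univ, forall_const]
  refine forall₂_congr fun ε _ => exists_congr fun N => ⟨fun h m hm n hn x => ?_, ?_⟩
  · rw [← hdist hn]
    exact h n (hm.trans hn) m hm x
  · intro h m hm n hn x
    rcases le_total m n with hmn | hnm
    · rw [dist_comm, hdist hmn]
      exact h m hm n hmn x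
    · rw [hdist hnm]
      exact h n hn m hnm x

theorem abs_sin_nat_mul_le (n : ℕ) (x : ℝ) : |sin (n * x)| ≤ n * |sin x| := by
  induction n with
  | zero => simp
  | succ n ih =>
    calc |sin ((n + 1 : ℕ) * x)| = |sin (n * x) * cos x + cos (n * x) * sin x| := by
          rw [← sin_add]; push_cast; ring_nf
      _ ≤ |sin (n * x)| * |cos x| + |cos (n * x)| * |sin x| := by
          rw [← abs_mul, ← abs_mul]; exact abs_add_le _ _
      _ ≤ |sin (n * x)| * 1 + 1 * |sin x| := by
          gcongr
          exacts [abs_cos_le_one x, abs_cos_le_one _]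
      _ ≤ (n + 1 : ℕ) * |sin x| := by push_cast; linarith

theorem two_mul_sin_half_mul_sum_Ioc_sin (x : ℝ) {m n : ℕ} (h : m ≤ n) :
    2 * sin (x / 2) * ∑ k ∈ Ioc m n, sin (k * x) =
      cos ((m + 1 / 2) * x) - cos ((n + 1 / 2) * x) := by
  induction n, h using Nat.le_induction with
  | base => simp
  | succ n hmn ih =>
    have hl : (n + 1 / 2) * x = (n + 1 : ℕ) * x - x / 2 := by push_cast; ring
    have hr : ((n + 1 : ℕ) + 1 / 2) * x = (n + 1 : ℕ) * x + x / 2 := by ring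
    rw [sum_Ioc_succ_top hmn, mul_add, ih, hl, hr, cos_sub, cos_add]
    ring

theorem abs_sum_Ioc_sin_le {x : ℝ} (hx : sin (x / 2) ≠ 0) (m n : ℕ) :
    |∑ k ∈ Ioc m n, sin (k * x)| ≤ 1 / |sin (x / 2)| := by
  rw [le_div_iff₀ (abs_pos.2 hx)]
  rcases le_total m n with h | h
  · have := congrArg abs (two_mul_sin_half_mul_sum_Ioc_sin x h)
    rw [abs_mul, abs_mul, abs_two] at this
    linarith [abs_sub _ _ |>.trans (add_le_add (abs_cos_le_one ((m + 1 / 2) * x))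
      (abs_cos_le_one ((n + 1 / 2) * x)))]
  · simp [Ioc_eq_empty_of_le h]

theorem norm_sum_Ioc_smul_le {E : Type*} [SeminormedAddCommGroup E] [NormedSpace ℝ E]
    {b : ℕ → ℝ} {z : ℕ → E} {m n : ℕ} {M : ℝ} (hb0 : ∀ k, m < k → 0 ≤ b k)
    (hb : ∀ k, m < k → b (k + 1) ≤ b k) (hz : ∀ i, ‖∑ k ∈ Ioc m i, z k‖ ≤ M) (h : m ≤ n) :
    ‖∑ k ∈ Ioc m n, b k • z k‖ ≤ b (m + 1) * M := by
  have hsmul : ∀ (c : ℝ) (i : ℕ), 0 ≤ c → ‖c • ∑ k ∈ Ioc m i, z k‖ ≤ c * M := fun c i hc => by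
    rw [norm_smul, Real.norm_of_nonneg hc]
    exact mul_le_mul_of_nonneg_left (hz i) hc
  have habel : ∀ n, m ≤ n →
      ‖∑ k ∈ Ioc m n, b k • z k - b (n + 1) • ∑ k ∈ Ioc m n, z k‖ ≤
        (b (m + 1) - b (n + 1)) * M := by
    intro n h
    induction n, h using Nat.le_induction with
    | base => simp
    | succ n hmn ih =>
      have hstep :
          ∑ k ∈ Ioc m (n + 1), b k • z k - b (n + 1 + 1) • ∑ k ∈ Ioc m (n + 1), z k =
            (∑ k ∈ Ioc m n, b k • z k - b (n + 1) • ∑ k ∈ Ioc m n, z k) +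
              (b (n + 1) - b (n + 1 + 1)) • ∑ k ∈ Ioc m (n + 1), z k := by
        simp only [sum_Ioc_succ_top hmn, smul_add, sub_smul]
        abel
      rw [hstep]
      calc _ ≤ (b (m + 1) - b (n + 1)) * M + (b (n + 1) - b (n + 1 + 1)) * M :=
            norm_add_le_of_le ih (hsmul _ _ (sub_nonneg.2 (hb _ (by omega))))
        _ = _ := by ring
  calc ‖∑ k ∈ Ioc m n, b k • z k‖ = ‖(∑ k ∈ Ioc m n, b k • z k -
          b (n + 1) • ∑ k ∈ Ioc m n, z k) + b (n + 1) • ∑ k ∈ Ioc m n, z k‖ := by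
        rw [sub_add_cancel]
    _ ≤ (b (m + 1) - b (n + 1)) * M + b (n + 1) * M :=
        norm_add_le_of_le (habel n h) (hsmul _ _ (hb0 _ (by omega)))
    _ = b (m + 1) * M := by ring

section SineSeries

variable {a : ℕ → ℝ} {m : ℕ} {ε : ℝ}

theorem abs_sum_Ioc_mul_sin_le_card_mul (ha0 : ∀ k, m < k → 0 ≤ a k)
    (hε : ∀ k, m < k → k * a k ≤ ε) (r : ℕ) (x : ℝ) :
    |∑ k ∈ Ioc m r, a k * sin (k * x)| ≤ (r - m : ℕ) * (2 * ε * |sin (x / 2)|) := by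
  have hterm : ∀ k ∈ Ioc m r, |a k * sin (k * x)| ≤ 2 * ε * |sin (x / 2)| := by
    intro k hk
    have hk := (mem_Ioc.1 hk).1
    have hsin : |sin (k * x)| ≤ 2 * k * |sin (x / 2)| := by
      have := abs_sin_nat_mul_le (2 * k) (x / 2)
      push_cast at this
      rwa [show 2 * (k : ℝ) * (x / 2) = k * x by ring] at this
    calc |a k * sin (k * x)| = a k * |sin (k * x)| := by rw [abs_mul, abs_of_nonneg (ha0 k hk)]
      _ ≤ a k * (2 * k * |sin (x / 2)|) := mul_le_mul_of_nonneg_left hsin (ha0 k hk)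
      _ = 2 * (k * a k) * |sin (x / 2)| := by ring
      _ ≤ 2 * ε * |sin (x / 2)| := by gcongr; exact hε k hk
  calc |∑ k ∈ Ioc m r, a k * sin (k * x)| ≤ ∑ k ∈ Ioc m r, |a k * sin (k * x)| :=
        abs_sum_le_sum_abs _ _
    _ ≤ ∑ _k ∈ Ioc m r, 2 * ε * |sin (x / 2)| := sum_le_sum hterm
    _ = (r - m : ℕ) * (2 * ε * |sin (x / 2)|) := by
        rw [sum_const, Nat.card_Ioc, nsmul_eq_mul]

theorem abs_sum_Ioc_mul_sin_le (ha0 : ∀ k, m < k → 0 ≤ a k)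
    (hmono : ∀ k, m < k → a (k + 1) ≤ a k) (hε : ∀ k, m < k → k * a k ≤ ε) (n : ℕ) (x : ℝ) :
    |∑ k ∈ Ioc m n, a k * sin (k * x)| ≤ 3 * ε := by
  have hε0 : 0 ≤ ε :=
    (mul_nonneg (Nat.cast_nonneg _) (ha0 (m + 1) (by omega))).trans (hε (m + 1) (by omega))
  have hhead := abs_sum_Ioc_mul_sin_le_card_mul ha0 hε (x := x)
  rcases (abs_nonneg (sin (x / 2))).eq_or_lt with hs0 | hs0
  · calc _ ≤ _ := hhead n
      _ = 0 := by rw [← hs0, mul_zero, mul_zero]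
      _ ≤ 3 * ε := by positivity
  have hsin : sin (x / 2) ≠ 0 := abs_pos.1 hs0
  set s := |sin (x / 2)|
  set j := max m ⌊1 / s⌋₊
  have hheadj : ∀ r ≤ j, |∑ k ∈ Ioc m r, a k * sin (k * x)| ≤ 2 * ε := by
    intro r hr
    have hcount : ((r - m : ℕ) : ℝ) * s ≤ 1 :=
      calc ((r - m : ℕ) : ℝ) * s ≤ ⌊1 / s⌋₊ * s := by gcongr; omega
        _ ≤ 1 / s * s := by gcongr; exact Nat.floor_le (by positivity)
        _ = 1 := div_mul_cancel₀ 1 hs0.ne'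
    calc _ ≤ _ := hhead r
      _ = 2 * ε * ((r - m : ℕ) * s) := by ring
      _ ≤ 2 * ε * 1 := by gcongr
      _ = 2 * ε := mul_one _
  rcases le_total n j with hnj | hjn
  · linarith [hheadj n hnj]
  have htail : |∑ k ∈ Ioc j n, a k * sin (k * x)| ≤ ε := by
    have hjs : 1 ≤ (j + 1 : ℕ) * s := by
      have hj : (⌊1 / s⌋₊ : ℝ) + 1 ≤ (j + 1 : ℕ) := by
        push_cast
        gcongr
        exact le_max_right _ _
      rw [← div_le_iff₀ hs0]
      exact (Nat.lt_floor_add_one (1 / s)).le.trans hj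
    calc |∑ k ∈ Ioc j n, a k * sin (k * x)| ≤ a (j + 1) * (1 / s) := by
          simpa only [Real.norm_eq_abs, smul_eq_mul] using
            norm_sum_Ioc_smul_le (z := fun k => sin (k * x)) (fun k hk => ha0 k (by omega))
              (fun k hk => hmono k (by omega)) (fun i => by
                simpa only [Real.norm_eq_abs] using abs_sum_Ioc_sin_le hsin j i) hjn
      _ ≤ a (j + 1) * (j + 1 : ℕ) := by
          rw [mul_one_div, div_le_iff₀ hs0]
          nlinarith [ha0 (j + 1) (by omega)]
      _ ≤ ε := by rw [mul_comm]; exact hε _ (by omega)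
  rw [← sum_Ioc_consecutive _ (le_max_left m _) hjn]
  calc _ ≤ |∑ k ∈ Ioc m j, a k * sin (k * x)| + |∑ k ∈ Ioc j n, a k * sin (k * x)| :=
        abs_add_le _ _
    _ ≤ 2 * ε + ε := add_le_add (hheadj j le_rfl) htail
    _ = 3 * ε := by ring

theorem natCast_mul_le_four_mul_sum_Ioc_half_mul_sin (ha0 : ∀ k, 1 ≤ k → 0 ≤ a k)
    (hmono : AntitoneOn a (Set.Ici 1)) (n : ℕ) :
    n * a n ≤ 4 * ∑ k ∈ Ioc (n / 2) n, a k * sin (k * (π / (2 * n))) := by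
  rcases n.eq_zero_or_pos with rfl | hn
  · simp
  have hn' : (0 : ℝ) < n := by exact_mod_cast hn
  have hterm : ∀ k ∈ Ioc (n / 2) n, a n / 2 ≤ a k * sin (k * (π / (2 * n))) := by
    intro k hk
    obtain ⟨hk1, hk2⟩ := mem_Ioc.1 hk
    have hkn : (k : ℝ) ≤ n := by exact_mod_cast hk2
    have h2k : (n : ℝ) ≤ 2 * k := by exact_mod_cast (by omega : n ≤ 2 * k)
    have hjordan := mul_le_sin (x := k * (π / (2 * n))) (by positivity) (by
      rw [mul_div, div_le_div_iff₀ (by positivity) two_pos]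
      nlinarith [pi_pos])
    have hhalf : 1 / 2 ≤ sin (k * (π / (2 * n))) := by
      refine le_trans ?_ hjordan
      rw [show 2 / π * (k * (π / (2 * n))) = k / n by field_simp, le_div_iff₀ hn']
      linarith
    calc a n / 2 = a n * (1 / 2) := by ring
      _ ≤ a k * sin (k * (π / (2 * n))) :=
          mul_le_mul (hmono (Set.mem_Ici.2 (by omega)) (Set.mem_Ici.2 hn) hk2) hhalf
            (by norm_num) (ha0 k (by omega))
  have hcard : (n : ℝ) ≤ 2 * (n - n / 2 : ℕ) := by
    exact_mod_cast (by omega : n ≤ 2 * (n - n / 2))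
  calc (n : ℝ) * a n ≤ 4 * ((n - n / 2 : ℕ) * (a n / 2)) := by
        nlinarith [ha0 n hn]
    _ ≤ 4 * ∑ k ∈ Ioc (n / 2) n, a k * sin (k * (π / (2 * n))) := by
        gcongr
        simpa [Nat.card_Ioc] using card_nsmul_le_sum _ _ _ hterm

end SineSeries

theorem stmt17_general (a : ℕ → ℝ) (ha : ∀ n : ℕ, 1 ≤ n → 0 ≤ a n)
    (hmono : ∀ n : ℕ, 1 ≤ n → a (n + 1) ≤ a n) :
    (∃ f : ℝ → ℝ,
        TendstoUniformly
          (fun (n : ℕ) (x : ℝ) => ∑ k ∈ Finset.Icc 1 n, a k * Real.sin (k * x))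
          f atTop) ↔
      Tendsto (fun n : ℕ => (n : ℝ) * a n) atTop (nhds 0) := by
  simp only [exists_tendstoUniformly_iff_uniformCauchySeqOn, uniformCauchySeqOn_sum_Icc_iff,
    Real.norm_eq_abs, Metric.tendsto_atTop, Real.dist_eq, sub_zero]
  refine ⟨fun h ε hε => ?_, fun h ε hε => ?_⟩
  · obtain ⟨N, hN⟩ := h (ε / 4) (by positivity)
    refine ⟨2 * N + 1, fun n hn => ?_⟩
    have hsum := hN (n / 2) (by omega) n (Nat.div_le_self n 2) (π / (2 * n))
    have hblock := natCast_mul_le_four_mul_sum_Ioc_half_mul_sin ha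
      (antitoneOn_nat_Ici_of_succ_le hmono) n
    rw [abs_of_nonneg (mul_nonneg n.cast_nonneg (ha n (by omega)))]
    linarith [le_abs_self (∑ k ∈ Ioc (n / 2) n, a k * sin (k * (π / (2 * n))))]
  · obtain ⟨N, hN⟩ := h (ε / 4) (by positivity)
    refine ⟨N, fun m hm n _ x => ?_⟩
    have := abs_sum_Ioc_mul_sin_le (m := m) (a := a) (ε := ε / 4) (fun k hk => ha k (by omega))
      (fun k hk => hmono k (by omega)) (fun k hk => (le_abs_self _).trans (hN k (by omega)).le) n x
    linarith

/-- (Chaundy–Jolliffe) For a nonnegative non-increasing sequence `a` with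
`aₙ → 0`, the sine series `∑ aₙ sin nx` converges uniformly on ℝ if and only if
`n·aₙ → 0`. -/
theorem stmt17 (a : ℕ → ℝ) (ha : ∀ n : ℕ, 1 ≤ n → 0 ≤ a n)
    (hmono : ∀ n : ℕ, 1 ≤ n → a (n + 1) ≤ a n)
    (hlim : Tendsto a atTop (nhds 0)) :
    (∃ f : ℝ → ℝ,
        TendstoUniformly
          (fun (n : ℕ) (x : ℝ) => ∑ k ∈ Finset.Icc 1 n, a k * Real.sin (k * x))
          f atTop) ↔
      Tendsto (fun n : ℕ => (n : ℝ) * a n) atTop (nhds 0) :=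
  stmt17_general a ha hmono
end
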